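/- If A is in the multiplicative domain of a unital completely positive map Φ on n×n matrices given in Kraus form, then Φ(AB) = Φ(A)Φ(B) and Φ(BA) = Φ(B)Φ(A) for every matrix B (Choi's bimodule property of the multiplicative domain). -/

import Mathlib

/-!
For a unital Kraus map `Φ X = ∑ₖ Vₖᴴ X Vₖ`, expanding the sum of squares
`∑ₖ (A Vₖ - Vₖ Φ(A))ᴴ (A Vₖ - Vₖ Φ(A))` gives `Φ(AᴴA) - Φ(A)ᴴΦ(A)`. So the Schwarz equality
`Φ(AᴴA) = Φ(A)ᴴΦ(A)` forces the intertwining relations `A Vₖ = Vₖ Φ(A)`, from which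
`Φ(BA) = Φ(B)Φ(A)` follows by pulling `A` through each `Vₖ`. The relation for `AB` is the same
statement for `Aᴴ` and `Bᴴ`, conjugate-transposed.
-/

open Matrix Finset

namespace Matrix

variable {m n R : Type*} [Fintype m] [Ring R] [StarRing R] [PartialOrder R]
  [StarOrderedRing R] [NoZeroDivisors R]

theorem sum_conjTranspose_mul_self_eq_zero_iff {ι : Type*} [Fintype ι] [Fintype n]
    (M : ι → Matrix m n R) : ∑ i, (M i)ᴴ * M i = 0 ↔ ∀ i, M i = 0 := by
  refine ⟨fun h i => ?_, fun h => by simp [h]⟩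
  have htrace : ∑ i, ((M i)ᴴ * M i).trace = 0 := by rw [← trace_sum, h, trace_zero]
  rw [Fintype.sum_eq_zero_iff_of_nonneg
    fun i => (posSemidef_conjTranspose_mul_self (M i)).trace_nonneg] at htrace
  exact trace_conjTranspose_mul_self_eq_zero_iff.mp (congrFun htrace i)

end Matrix

section KrausMap

variable {ι n R : Type*} [Fintype ι] [Fintype n] [CommRing R] [StarRing R]

def krausMap (V : ι → Matrix n n R) (X : Matrix n n R) : Matrix n n R :=
  ∑ k, (V k)ᴴ * X * V k

variable (V : ι → Matrix n n R)

theorem krausMap_conjTranspose (X : Matrix n n R) : krausMap V Xᴴ = (krausMap V X)ᴴ := by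
  simp only [krausMap, conjTranspose_sum, conjTranspose_mul, conjTranspose_conjTranspose,
    Matrix.mul_assoc]

theorem krausMap_mul_of_mul_eq {A : Matrix n n R} (hA : ∀ k, A * V k = V k * krausMap V A)
    (B : Matrix n n R) : krausMap V (B * A) = krausMap V B * krausMap V A := by
  rw [krausMap, krausMap, Finset.sum_mul]
  exact Finset.sum_congr rfl fun k _ => by
    rw [Matrix.mul_assoc, Matrix.mul_assoc, hA, ← Matrix.mul_assoc, ← Matrix.mul_assoc]

variable [DecidableEq n] {V}

theorem sum_conjTranspose_mul_self_mul_sub_eq (hV : ∑ k, (V k)ᴴ * V k = 1) (A : Matrix n n R) :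
    ∑ k, (A * V k - V k * krausMap V A)ᴴ * (A * V k - V k * krausMap V A)
      = krausMap V (Aᴴ * A) - (krausMap V A)ᴴ * krausMap V A := by
  have hexpand : ∀ k, (A * V k - V k * krausMap V A)ᴴ * (A * V k - V k * krausMap V A)
      = (V k)ᴴ * (Aᴴ * A) * V k - (V k)ᴴ * Aᴴ * V k * krausMap V A
        - (krausMap V A)ᴴ * ((V k)ᴴ * A * V k)
        + (krausMap V A)ᴴ * ((V k)ᴴ * V k) * krausMap V A := fun k => by
    simp only [conjTranspose_sub, conjTranspose_mul]
    noncomm_ring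
  have hstar : ∑ k, (V k)ᴴ * Aᴴ * V k = (krausMap V A)ᴴ := krausMap_conjTranspose V A
  simp only [hexpand, Finset.sum_add_distrib, Finset.sum_sub_distrib, ← Finset.sum_mul,
    ← Finset.mul_sum, hV, hstar, Matrix.mul_one]
  simp only [krausMap]
  abel

variable [PartialOrder R] [StarOrderedRing R] [NoZeroDivisors R]

theorem mul_eq_mul_krausMap_of_krausMap_conjTranspose_mul_self
    (hV : ∑ k, (V k)ᴴ * V k = 1) {A : Matrix n n R}
    (hA : krausMap V (Aᴴ * A) = (krausMap V A)ᴴ * krausMap V A) (k : ι) :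
    A * V k = V k * krausMap V A := by
  have hsum := sum_conjTranspose_mul_self_mul_sub_eq hV A
  rw [hA, sub_self, sum_conjTranspose_mul_self_eq_zero_iff] at hsum
  exact sub_eq_zero.mp (hsum k)

theorem krausMap_mul_right_of_krausMap_conjTranspose_mul_self
    (hV : ∑ k, (V k)ᴴ * V k = 1) {A : Matrix n n R}
    (hA : krausMap V (Aᴴ * A) = (krausMap V A)ᴴ * krausMap V A) (B : Matrix n n R) :
    krausMap V (B * A) = krausMap V B * krausMap V A :=
  krausMap_mul_of_mul_eq V (mul_eq_mul_krausMap_of_krausMap_conjTranspose_mul_self hV hA) B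

theorem krausMap_mul_left_of_krausMap_mul_conjTranspose_self
    (hV : ∑ k, (V k)ᴴ * V k = 1) {A : Matrix n n R}
    (hA : krausMap V (A * Aᴴ) = krausMap V A * (krausMap V A)ᴴ) (B : Matrix n n R) :
    krausMap V (A * B) = krausMap V A * krausMap V B := by
  have hA' : krausMap V (Aᴴᴴ * Aᴴ) = (krausMap V Aᴴ)ᴴ * krausMap V Aᴴ := by
    rwa [conjTranspose_conjTranspose, krausMap_conjTranspose, conjTranspose_conjTranspose]
  have h := congrArg conjTranspose
    (krausMap_mul_right_of_krausMap_conjTranspose_mul_self hV hA' Bᴴ)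
  simpa only [← conjTranspose_mul, krausMap_conjTranspose, conjTranspose_conjTranspose] using h

end KrausMap

theorem stmt_4 {n m : ℕ} (V : Fin m → Matrix (Fin n) (Fin n) ℂ)
    (hV : ∑ k, (V k)ᴴ * V k = 1)
    (A : Matrix (Fin n) (Fin n) ℂ)
    (h1 : (∑ k, (V k)ᴴ * (Aᴴ * A) * V k)
      = (∑ k, (V k)ᴴ * A * V k)ᴴ * (∑ k, (V k)ᴴ * A * V k))
    (h2 : (∑ k, (V k)ᴴ * (A * Aᴴ) * V k)
      = (∑ k, (V k)ᴴ * A * V k) * (∑ k, (V k)ᴴ * A * V k)ᴴ) :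
    ∀ B : Matrix (Fin n) (Fin n) ℂ,
      (∑ k, (V k)ᴴ * (A * B) * V k)
        = (∑ k, (V k)ᴴ * A * V k) * (∑ k, (V k)ᴴ * B * V k) ∧
      (∑ k, (V k)ᴴ * (B * A) * V k)
        = (∑ k, (V k)ᴴ * B * V k) * (∑ k, (V k)ᴴ * A * V k) := by
  open scoped ComplexOrder in
  exact fun B => ⟨krausMap_mul_left_of_krausMap_mul_conjTranspose_self hV h2 B,
    krausMap_mul_right_of_krausMap_conjTranspose_mul_self hV h1 B⟩
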